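/- Let M : [r] × [s] × [t] → {0,1} be a three-dimensional binary matrix with al(M) ≤ l, |R(M)| ≤ m and |C(M)| ≤ m. Then |S(M)| ≤ (l-1)(m+1)^2. Here R(M) ⊆ [r-1] is the set of indices i such that M(i,j,k) ≠ M(i+1,j,k) for some (j,k); C(M) ⊆ [s-1] and S(M) ⊆ [t-1] are defined analogously in the second and third coordinates; and al(M) is one plus the maximum number of adjacent unequal pairs along any line of M (a line fixes two of the three coordinates). -/

import Mathlib

/-- Indices `i ∈ [r-1]` with `M(i,j,k) ≠ M(i+1,j,k)` for some `(j,k)`. -/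
def R3 {r s t : ℕ} (M : Fin r → Fin s → Fin t → Bool) : Finset (Fin (r - 1)) :=
  Finset.univ.filter (fun i => ∃ j k,
    M ⟨i.val, by have := i.isLt; omega⟩ j k ≠ M ⟨i.val + 1, by have := i.isLt; omega⟩ j k)

/-- Indices `j ∈ [s-1]` with `M(i,j,k) ≠ M(i,j+1,k)` for some `(i,k)`. -/
def C3 {r s t : ℕ} (M : Fin r → Fin s → Fin t → Bool) : Finset (Fin (s - 1)) :=
  Finset.univ.filter (fun j => ∃ i k,
    M i ⟨j.val, by have := j.isLt; omega⟩ k ≠ M i ⟨j.val + 1, by have := j.isLt; omega⟩ k)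

/-- Indices `k ∈ [t-1]` with `M(i,j,k) ≠ M(i,j,k+1)` for some `(i,j)`. -/
def S3 {r s t : ℕ} (M : Fin r → Fin s → Fin t → Bool) : Finset (Fin (t - 1)) :=
  Finset.univ.filter (fun k => ∃ i j,
    M i j ⟨k.val, by have := k.isLt; omega⟩ ≠ M i j ⟨k.val + 1, by have := k.isLt; omega⟩)

/-- `al(M)`: one plus the maximum number of adjacent unequal pairs along any line
of `M` (a line fixes two of the three coordinates and varies the third). -/
def al3 {r s t : ℕ} (M : Fin r → Fin s → Fin t → Bool) : ℕ :=
  1 + max (max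
    (Finset.univ.sup (fun p : Fin s × Fin t =>
      (Finset.univ.filter (fun i : Fin (r - 1) =>
        M ⟨i.val, by have := i.isLt; omega⟩ p.1 p.2 ≠
          M ⟨i.val + 1, by have := i.isLt; omega⟩ p.1 p.2)).card))
    (Finset.univ.sup (fun p : Fin r × Fin t =>
      (Finset.univ.filter (fun j : Fin (s - 1) =>
        M p.1 ⟨j.val, by have := j.isLt; omega⟩ p.2 ≠
          M p.1 ⟨j.val + 1, by have := j.isLt; omega⟩ p.2)).card)))
    (Finset.univ.sup (fun p : Fin r × Fin s =>
      (Finset.univ.filter (fun k : Fin (t - 1) =>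
        M p.1 p.2 ⟨k.val, by have := k.isLt; omega⟩ ≠
          M p.1 p.2 ⟨k.val + 1, by have := k.isLt; omega⟩)).card))

/-!
Along the first coordinate `M` changes only at the indices of `R(M)`, so the slices `M i` take
at most `|R(M)| + 1 ≤ m + 1` distinct values; likewise the slices `M · j` take at most `m + 1`
values. A line `M i j` is determined by the pair of slices `(M i, M · j)`, so there are at most
`(m + 1)^2` distinct lines along the third coordinate, each changing at most `l - 1` times, and
`S(M)` is the union of their change indices.
-/

open Finset

section Changes

variable {α : Type*} [DecidableEq α]

def changeIndices {n : ℕ} (f : Fin n → α) : Finset (Fin (n - 1)) :=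
  univ.filter fun e => f ⟨e, by have := e.isLt; omega⟩ ≠ f ⟨e + 1, by have := e.isLt; omega⟩

theorem card_image_range_succ_le (g : ℕ → α) (n : ℕ) :
    #((range (n + 1)).image g) ≤ #((range n).filter fun e => g e ≠ g (e + 1)) + 1 := by
  induction n with
  | zero => simp
  | succ n ih =>
    rw [range_add_one (n := n), filter_insert, range_add_one, image_insert]
    by_cases h : g n = g (n + 1)
    · have hmem : g (n + 1) ∈ (range (n + 1)).image g := mem_image.2 ⟨n, by simp, h⟩
      rwa [insert_eq_of_mem hmem, if_neg (not_not.2 h)]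
    · rw [if_pos h, card_insert_of_notMem (a := n) (by simp)]
      exact (card_insert_le _ _).trans (by omega)

theorem card_image_le_card_changeIndices_add_one {n : ℕ} (f : Fin n → α) :
    #(univ.image f) ≤ #(changeIndices f) + 1 := by
  rcases n with _ | n
  · simp
  set g : ℕ → α := fun k => f ⟨min k n, by omega⟩
  have himage : univ.image f = (range (n + 1)).image g := by
    ext a
    simp only [mem_image, mem_univ, true_and, mem_range, g]
    constructor
    · rintro ⟨i, rfl⟩
      exact ⟨i, i.isLt, by congr; omega⟩
    · rintro ⟨k, hk, rfl⟩
      exact ⟨_, rfl⟩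
  have hchanges :
      (changeIndices f).map Fin.valEmbedding = (range n).filter fun e => g e ≠ g (e + 1) := by
    ext e
    simp only [changeIndices, mem_map, mem_filter, mem_univ, true_and, Fin.valEmbedding_apply,
      mem_range, g]
    constructor
    · rintro ⟨e, he, rfl⟩
      have := e.isLt
      refine ⟨this, ?_⟩
      simpa only [min_eq_left (show (e : ℕ) ≤ n by omega),
        min_eq_left (show (e : ℕ) + 1 ≤ n by omega)] using he
    · rintro ⟨he, hne⟩
      refine ⟨⟨e, he⟩, ?_, rfl⟩
      simpa only [min_eq_left (show e ≤ n by omega), min_eq_left (show e + 1 ≤ n by omega)]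
        using hne
  rw [himage, ← card_map Fin.valEmbedding, hchanges]
  exact card_image_range_succ_le g n

end Changes

theorem card_image_le_card_image_of_factor {ι β γ : Type*} [DecidableEq β] [DecidableEq γ]
    (s : Finset ι) (f : ι → β) (g : ι → γ) (hfg : ∀ i ∈ s, ∀ j ∈ s, g i = g j → f i = f j) :
    #(s.image f) ≤ #(s.image g) := by
  set graph := s.image fun i => (g i, f i)
  have hfst : Set.InjOn Prod.fst (graph : Set (γ × β)) := by
    simp only [graph, coe_image, Set.InjOn, Set.mem_image, mem_coe]
    rintro _ ⟨i, hi, rfl⟩ _ ⟨j, hj, rfl⟩ hij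
    simp only at hij
    rw [hij, hfg i hi j hj hij]
  calc #(s.image f) = #(graph.image Prod.snd) := by simp [graph, image_image, Function.comp_def]
    _ ≤ #graph := card_image_le
    _ = #(graph.image Prod.fst) := (card_image_of_injOn hfst).symm
    _ = #(s.image g) := by simp [graph, image_image, Function.comp_def]

theorem card_image_uncurry_le {ι κ β : Type*} [Fintype ι] [Fintype κ] [DecidableEq β]
    [DecidableEq (κ → β)] [DecidableEq (ι → β)] (M : ι → κ → β) :
    #(univ.image fun p : ι × κ => M p.1 p.2) ≤
      #(univ.image M) * #(univ.image fun j i => M i j) := by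
  calc #(univ.image fun p : ι × κ => M p.1 p.2)
      ≤ #(univ.image (Prod.map M fun j i => M i j)) := by
        refine card_image_le_card_image_of_factor _ _ _ ?_
        rintro ⟨i, j⟩ - ⟨i', j'⟩ - h
        simp only [Prod.map, Prod.mk.injEq] at h
        rw [h.1, ← congrFun h.2 i']
    _ = #(univ.image M) * #(univ.image fun j i => M i j) := by
        rw [← univ_product_univ, prodMap_image_product, card_product]

section BinaryMatrix

variable {r s t : ℕ} (M : Fin r → Fin s → Fin t → Bool)

theorem R3_eq_changeIndices : R3 M = changeIndices M := by
  ext i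
  simp [R3, changeIndices, funext_iff]

theorem C3_eq_changeIndices : C3 M = changeIndices fun j i k => M i j k := by
  ext j
  simp [C3, changeIndices, funext_iff]

theorem S3_eq_biUnion_changeIndices :
    S3 M = (univ.image fun p : Fin r × Fin s => M p.1 p.2).biUnion changeIndices := by
  ext k
  simp [S3, changeIndices]

theorem card_changeIndices_add_one_le_al3 (i : Fin r) (j : Fin s) :
    #(changeIndices (M i j)) + 1 ≤ al3 M := by
  calc #(changeIndices (M i j)) + 1
      ≤ 1 + univ.sup fun p : Fin r × Fin s => #(changeIndices (M p.1 p.2)) := by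
        rw [add_comm]
        gcongr
        exact le_sup (f := fun p : Fin r × Fin s => #(changeIndices (M p.1 p.2))) (mem_univ (i, j))
    _ ≤ al3 M := Nat.add_le_add_left (le_max_right _ _) 1

end BinaryMatrix

theorem stmt_14 {r s t : ℕ} (M : Fin r → Fin s → Fin t → Bool) (l m : ℕ)
    (hal : al3 M ≤ l) (hR : (R3 M).card ≤ m) (hC : (C3 M).card ≤ m) :
    (S3 M).card ≤ (l - 1) * (m + 1) ^ 2 := by
  set lines := univ.image fun p : Fin r × Fin s => M p.1 p.2
  have hlines : #lines ≤ (m + 1) ^ 2 :=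
    calc #lines ≤ #(univ.image M) * #(univ.image fun j i k => M i j k) := card_image_uncurry_le M
      _ ≤ (#(R3 M) + 1) * (#(C3 M) + 1) := by
        rw [R3_eq_changeIndices, C3_eq_changeIndices]
        exact Nat.mul_le_mul (card_image_le_card_changeIndices_add_one _)
          (card_image_le_card_changeIndices_add_one _)
      _ ≤ (m + 1) ^ 2 := by rw [sq]; gcongr
  have hline : ∀ ℓ ∈ lines, #(changeIndices ℓ) ≤ l - 1 := by
    simp only [lines, mem_image]
    rintro _ ⟨⟨i, j⟩, -, rfl⟩
    exact Nat.le_sub_of_add_le ((card_changeIndices_add_one_le_al3 M i j).trans hal)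
  calc #(S3 M) ≤ ∑ ℓ ∈ lines, #(changeIndices ℓ) :=
        S3_eq_biUnion_changeIndices M ▸ card_biUnion_le
    _ ≤ #lines * (l - 1) := sum_le_card_nsmul _ _ _ hline
    _ ≤ (l - 1) * (m + 1) ^ 2 := by rw [mul_comm]; gcongr
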